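/- In the GPRK setting for the adjoint of a partitioned system (no conditions on coefficients), the difference (λ_{n+1}^{[1]})^⊤ δ_{n+1}^{[1]} + (λ_{n+1}^{[2]})^⊤ δ_{n+1}^{[2]} - (λ_n^{[1]})^⊤ δ_n^{[1]} - (λ_n^{[2]})^⊤ δ_n^{[2]} equals h Σ_i (b_i^{[1]} - B_i^{[11]}) (Λ_i^{[1]})^⊤ J_i^{11} D_i^{[1]} + h Σ_i (b_i^{[1]} - B_i^{[21]}) (Λ_i^{[1]})^⊤ J_i^{12} D_i^{[2]} + h Σ_i (b_i^{[2]} - B_i^{[12]}) (Λ_i^{[2]})^⊤ J_i^{21} D_i^{[1]} + h Σ_i (b_i^{[2]} - B_i^{[22]}) (Λ_i^{[2]})^⊤ J_i^{22} D_i^{[2]} + h² Σ_{i,j} (b_i^{[1]} A_{ij}^{[11]} + B_j^{[11]} a_{ji}^{[1]} - b_i^{[1]} B_j^{[11]}) (l_j^{[11]})^⊤ m_i^{[1]} + h² Σ_{i,j} (b_i^{[1]} A_{ij}^{[12]} + B_j^{[12]} a_{ji}^{[1]} - b_i^{[1]} B_j^{[12]}) (l_j^{[12]})^⊤ m_i^{[1]}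 + h² Σ_{i,j} (b_i^{[2]} A_{ij}^{[21]} + B_j^{[21]} a_{ji}^{[2]} - b_i^{[2]} B_j^{[21]}) (l_j^{[21]})^⊤ m_i^{[2]} + h² Σ_{i,j} (b_i^{[2]} A_{ij}^{[22]} + B_j^{[22]} a_{ji}^{[2]} - b_i^{[2]} B_j^{[22]}) (l_j^{[22]})^⊤ m_i^{[2]}. -/

import Mathlib

/-!
Only the bilinearity of `⬝ᵥ` is used. For each component, expanding
`(λ - h u) ⬝ᵥ (δ + h v) - λ ⬝ᵥ δ` and trading `λ`, `δ` for the stage values `Λᵢ`, `Dᵢ` gives a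
discrete Lagrange identity: an `h`-term `∑ᵢ (bᵢ Λᵢ ⬝ᵥ mᵢ - Bᵢ lᵢ ⬝ᵥ Dᵢ)` plus an `h²`-term with
coefficients `bᵢ Aᵢⱼ + Bⱼ aⱼᵢ - bᵢ Bⱼ`. Since `m` and `l` come from `D` and `Λ` through the same
Jacobian blocks (transposed for `l`), both `Λᵢ ⬝ᵥ mᵢ` and `lᵢ ⬝ᵥ Dᵢ` split into pairings
`Λᵢ ⬝ᵥ Jᵢ Dᵢ`, which regroup into the four `h`-terms.
-/

open Finset

namespace Matrix

theorem transpose_mulVec_dotProduct {R m n : Type*} [CommSemiring R] [Fintype m] [Fintype n]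
    (J : Matrix m n R) (u : m → R) (v : n → R) : (Jᵀ *ᵥ u) ⬝ᵥ v = u ⬝ᵥ J *ᵥ v := by
  rw [dotProduct_comm, dotProduct_transpose_mulVec]

end Matrix

section RungeKutta

variable {R ι n P : Type*} [CommRing R] [Fintype ι] [Fintype n] [Fintype P]

theorem dotProduct_sum_smul (u : n → R) (c : ι → R) (v : ι → n → R) :
    u ⬝ᵥ ∑ i, c i • v i = ∑ i, c i * u ⬝ᵥ v i := by
  simp only [dotProduct_sum, dotProduct_smul, smul_eq_mul]

theorem sub_smul_dotProduct_add_smul_sub (h : R) (lam u δ v : n → R) :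
    (lam - h • u) ⬝ᵥ (δ + h • v) - lam ⬝ᵥ δ = h * (lam ⬝ᵥ v - u ⬝ᵥ δ) - h ^ 2 * u ⬝ᵥ v := by
  simp only [sub_dotProduct, dotProduct_add, smul_dotProduct, dotProduct_smul, smul_eq_mul]
  ring

/-- The `λ`-update may draw on several stage families `l p`, as in a partitioned method. -/
theorem dotProduct_sub_dotProduct_of_rk_step (h : R) (a : ι → ι → R) (b : ι → R)
    (A : P → ι → ι → R) (B : P → ι → R)
    (δ δ' lam lam' : n → R) (m D Λ : ι → n → R) (l : P → ι → n → R)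
    (hδ : δ' = δ + h • ∑ i, b i • m i)
    (hD : ∀ i, D i = δ + h • ∑ j, a i j • m j)
    (hlam : lam' = lam - h • ∑ p, ∑ i, B p i • l p i)
    (hΛ : ∀ i, Λ i = lam - h • ∑ p, ∑ j, A p i j • l p j) :
    lam' ⬝ᵥ δ' - lam ⬝ᵥ δ
      = h * (∑ i, b i * Λ i ⬝ᵥ m i - ∑ p, ∑ i, B p i * l p i ⬝ᵥ D i)
        + h ^ 2 * ∑ p, ∑ i, ∑ j, (b i * A p i j + B p j * a j i - b i * B p j)
            * l p j ⬝ᵥ m i := by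
  have hlam_v : lam ⬝ᵥ ∑ i, b i • m i = ∑ i, b i * Λ i ⬝ᵥ m i
      + h * ∑ p, ∑ i, ∑ j, b i * A p i j * l p j ⬝ᵥ m i := by
    have hlam_m : ∀ i, lam ⬝ᵥ m i
        = Λ i ⬝ᵥ m i + h * ∑ p, ∑ j, A p i j * l p j ⬝ᵥ m i := by
      intro i
      simp only [hΛ i, sub_dotProduct, smul_dotProduct, sum_dotProduct, smul_eq_mul,
        sub_add_cancel]
    simp only [dotProduct_sum_smul, hlam_m, mul_add, sum_add_distrib, mul_sum]
    rw [sum_comm (γ := ι)]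
    simp only [mul_left_comm, mul_assoc]
  have hu_δ : (∑ p, ∑ i, B p i • l p i) ⬝ᵥ δ = ∑ p, ∑ i, B p i * l p i ⬝ᵥ D i
      - h * ∑ p, ∑ i, ∑ j, B p j * a j i * l p j ⬝ᵥ m i := by
    have hl_δ : ∀ p i, l p i ⬝ᵥ δ = l p i ⬝ᵥ D i - h * ∑ j, a i j * l p i ⬝ᵥ m j := by
      intro p i
      simp only [hD i, dotProduct_add, dotProduct_smul, dotProduct_sum_smul, smul_eq_mul,
        add_sub_cancel_right]
    simp only [sum_dotProduct, smul_dotProduct, smul_eq_mul, hl_δ, mul_sub, sum_sub_distrib,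
      mul_sum]
    rw [sum_congr rfl fun p _ => sum_comm (γ := ι)]
    simp only [mul_left_comm, mul_assoc]
  have hu_v : (∑ p, ∑ i, B p i • l p i) ⬝ᵥ ∑ i, b i • m i
      = ∑ p, ∑ i, ∑ j, b i * B p j * l p j ⬝ᵥ m i := by
    simp only [sum_dotProduct, smul_dotProduct, smul_eq_mul, dotProduct_sum_smul, mul_sum]
    rw [sum_comm]
    simp only [mul_assoc]
  rw [hδ, hlam, sub_smul_dotProduct_add_smul_sub, hlam_v, hu_δ, hu_v]
  simp only [add_mul, sub_mul, sum_add_distrib, sum_sub_distrib]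
  ring

end RungeKutta

/-- Exact expression for the change of `(λ¹)ᵀδ¹ + (λ²)ᵀδ²` over one combined
PRK/GPRK step, for arbitrary coefficients. -/
theorem gprk_adjoint_step_difference
    (d₁ d₂ s : ℕ) (h : ℝ)
    (a1 a2 : Fin s → Fin s → ℝ) (b1 b2 : Fin s → ℝ)
    (A11 A12 A21 A22 : Fin s → Fin s → ℝ) (B11 B12 B21 B22 : Fin s → ℝ)
    (J11 : Fin s → Matrix (Fin d₁) (Fin d₁) ℝ)
    (J12 : Fin s → Matrix (Fin d₁) (Fin d₂) ℝ)
    (J21 : Fin s → Matrix (Fin d₂) (Fin d₁) ℝ)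
    (J22 : Fin s → Matrix (Fin d₂) (Fin d₂) ℝ)
    (δ1n δ1n1 lam1n lam1n1 : Fin d₁ → ℝ) (δ2n δ2n1 lam2n lam2n1 : Fin d₂ → ℝ)
    (m1 D1 : Fin s → (Fin d₁ → ℝ)) (m2 D2 : Fin s → (Fin d₂ → ℝ))
    (l11 l12 Λ1 : Fin s → (Fin d₁ → ℝ)) (l21 l22 Λ2 : Fin s → (Fin d₂ → ℝ))
    (hδ1 : δ1n1 = δ1n + h • ∑ i, b1 i • m1 i)
    (hδ2 : δ2n1 = δ2n + h • ∑ i, b2 i • m2 i)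
    (hm1 : ∀ i, m1 i = (J11 i).mulVec (D1 i) + (J12 i).mulVec (D2 i))
    (hm2 : ∀ i, m2 i = (J21 i).mulVec (D1 i) + (J22 i).mulVec (D2 i))
    (hD1 : ∀ i, D1 i = δ1n + h • ∑ j, a1 i j • m1 j)
    (hD2 : ∀ i, D2 i = δ2n + h • ∑ j, a2 i j • m2 j)
    (hlam1 : lam1n1 = lam1n - h • ∑ i, (B11 i • l11 i + B12 i • l12 i))
    (hlam2 : lam2n1 = lam2n - h • ∑ i, (B21 i • l21 i + B22 i • l22 i))
    (hl11 : ∀ i, l11 i = (J11 i).transpose.mulVec (Λ1 i))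
    (hl12 : ∀ i, l12 i = (J21 i).transpose.mulVec (Λ2 i))
    (hl21 : ∀ i, l21 i = (J12 i).transpose.mulVec (Λ1 i))
    (hl22 : ∀ i, l22 i = (J22 i).transpose.mulVec (Λ2 i))
    (hΛ1 : ∀ i, Λ1 i = lam1n - h • ∑ j, (A11 i j • l11 j + A12 i j • l12 j))
    (hΛ2 : ∀ i, Λ2 i = lam2n - h • ∑ j, (A21 i j • l21 j + A22 i j • l22 j)) :
    dotProduct lam1n1 δ1n1 + dotProduct lam2n1 δ2n1
      - dotProduct lam1n δ1n - dotProduct lam2n δ2n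
      = h * ∑ i, (b1 i - B11 i) * dotProduct (Λ1 i) ((J11 i).mulVec (D1 i))
        + h * ∑ i, (b1 i - B21 i) * dotProduct (Λ1 i) ((J12 i).mulVec (D2 i))
        + h * ∑ i, (b2 i - B12 i) * dotProduct (Λ2 i) ((J21 i).mulVec (D1 i))
        + h * ∑ i, (b2 i - B22 i) * dotProduct (Λ2 i) ((J22 i).mulVec (D2 i))
        + h ^ 2 * ∑ i, ∑ j, (b1 i * A11 i j + B11 j * a1 j i - b1 i * B11 j)
            * dotProduct (l11 j) (m1 i)
        + h ^ 2 * ∑ i, ∑ j, (b1 i * A12 i j + B12 j * a1 j i - b1 i * B12 j)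
            * dotProduct (l12 j) (m1 i)
        + h ^ 2 * ∑ i, ∑ j, (b2 i * A21 i j + B21 j * a2 j i - b2 i * B21 j)
            * dotProduct (l21 j) (m2 i)
        + h ^ 2 * ∑ i, ∑ j, (b2 i * A22 i j + B22 j * a2 j i - b2 i * B22 j)
            * dotProduct (l22 j) (m2 i) := by
  have hc1 := dotProduct_sub_dotProduct_of_rk_step h a1 b1 ![A11, A12] ![B11, B12]
    δ1n δ1n1 lam1n lam1n1 m1 D1 Λ1 ![l11, l12] hδ1 hD1
    (by simp [hlam1, Fin.sum_univ_two, sum_add_distrib])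
    (fun i => by simp [hΛ1 i, Fin.sum_univ_two, sum_add_distrib])
  have hc2 := dotProduct_sub_dotProduct_of_rk_step h a2 b2 ![A21, A22] ![B21, B22]
    δ2n δ2n1 lam2n lam2n1 m2 D2 Λ2 ![l21, l22] hδ2 hD2
    (by simp [hlam2, Fin.sum_univ_two, sum_add_distrib])
    (fun i => by simp [hΛ2 i, Fin.sum_univ_two, sum_add_distrib])
  have hΛm1 i : Λ1 i ⬝ᵥ m1 i
      = Λ1 i ⬝ᵥ (J11 i).mulVec (D1 i) + Λ1 i ⬝ᵥ (J12 i).mulVec (D2 i) := by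
    rw [hm1, dotProduct_add]
  have hΛm2 i : Λ2 i ⬝ᵥ m2 i
      = Λ2 i ⬝ᵥ (J21 i).mulVec (D1 i) + Λ2 i ⬝ᵥ (J22 i).mulVec (D2 i) := by
    rw [hm2, dotProduct_add]
  have hlD11 i : l11 i ⬝ᵥ D1 i = Λ1 i ⬝ᵥ (J11 i).mulVec (D1 i) := by
    rw [hl11, Matrix.transpose_mulVec_dotProduct]
  have hlD12 i : l12 i ⬝ᵥ D1 i = Λ2 i ⬝ᵥ (J21 i).mulVec (D1 i) := by
    rw [hl12, Matrix.transpose_mulVec_dotProduct]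
  have hlD21 i : l21 i ⬝ᵥ D2 i = Λ1 i ⬝ᵥ (J12 i).mulVec (D2 i) := by
    rw [hl21, Matrix.transpose_mulVec_dotProduct]
  have hlD22 i : l22 i ⬝ᵥ D2 i = Λ2 i ⬝ᵥ (J22 i).mulVec (D2 i) := by
    rw [hl22, Matrix.transpose_mulVec_dotProduct]
  simp only [Fin.sum_univ_two, Matrix.cons_val_zero, Matrix.cons_val_one, hΛm1, hΛm2, hlD11,
    hlD12, hlD21, hlD22, mul_add, sum_add_distrib, sub_mul, sum_sub_distrib] at hc1 hc2
  simp only [sub_mul, sum_sub_distrib]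
  linear_combination hc1 + hc2
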